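/- arXiv:1403.6783 — 2 statements merged into one kernel-verified Lean document; each statement's English description precedes it below -/
import Mathlib

section
/- Let f : V → ℝ be smooth on an open set V ⊆ ℝ², let a ≠ 0, b, λ ≠ 0 be real constants, and let U : ℝ → ℝ be smooth with U'(u) ≠ 0 for all u. Define T(y,u) = (a·y + b, U(u)) and f̃(y,u) = λ·f(T(y,u)) on T⁻¹(V). Then at every point (y,u) with f_y(T(y,u)) ≠ 0 and f_u(T(y,u)) ≠ 0 one has J33(f̃)(y,u) = J33(f)(T(y,u)), where J33(f) = f²·f_{yuu}/(f_u²·f_y) − (f·f_{yu}/(f_y·f_u))·(f·f_{uu}/f_u²). -/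
/-- Partial derivative in the first variable. -/
noncomputable def pd1 (f : ℝ → ℝ → ℝ) : ℝ → ℝ → ℝ := fun y u => deriv (fun s => f s u) y

/-- Partial derivative in the second variable. -/
noncomputable def pd2 (f : ℝ → ℝ → ℝ) : ℝ → ℝ → ℝ := fun y u => deriv (f y) u

/-- Second-order differential invariant `J21 = f·f_yy / f_y²`. -/
noncomputable def J21 (f : ℝ → ℝ → ℝ) : ℝ → ℝ → ℝ := fun y u =>
  f y u * pd1 (pd1 f) y u / (pd1 f y u) ^ 2

/-- Second-order differential invariant `J22 = f·f_yu / (f_y·f_u)`. -/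
noncomputable def J22 (f : ℝ → ℝ → ℝ) : ℝ → ℝ → ℝ := fun y u =>
  f y u * pd2 (pd1 f) y u / (pd1 f y u * pd2 f y u)

/-- Third-order differential invariant `J31 = f²·f_yyy / f_y³`. -/
noncomputable def J31 (f : ℝ → ℝ → ℝ) : ℝ → ℝ → ℝ := fun y u =>
  f y u ^ 2 * pd1 (pd1 (pd1 f)) y u / (pd1 f y u) ^ 3

/-- Third-order differential invariant `J32 = f²·f_yyu / (f_y²·f_u)`. -/
noncomputable def J32 (f : ℝ → ℝ → ℝ) : ℝ → ℝ → ℝ := fun y u =>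
  f y u ^ 2 * pd2 (pd1 (pd1 f)) y u / ((pd1 f y u) ^ 2 * pd2 f y u)

/-- Third-order differential invariant `J33 = f²·f_yuu/(f_u²·f_y) − J22·f·f_uu/f_u²`. -/
noncomputable def J33 (f : ℝ → ℝ → ℝ) : ℝ → ℝ → ℝ := fun y u =>
  f y u ^ 2 * pd2 (pd2 (pd1 f)) y u / ((pd2 f y u) ^ 2 * pd1 f y u)
    - J22 f y u * (f y u * pd2 (pd2 f) y u / (pd2 f y u) ^ 2)

/-- Fourth-order differential invariant `J41 = f³·f_yyyy / f_y⁴`. -/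
noncomputable def J41 (f : ℝ → ℝ → ℝ) : ℝ → ℝ → ℝ := fun y u =>
  f y u ^ 3 * pd1 (pd1 (pd1 (pd1 f))) y u / (pd1 f y u) ^ 4

/-- Fourth-order differential invariant
`J44 = f³·f_yuuu/(f_y·f_u³) − 3·J33·f·f_uu/f_u² − J22·f²·f_uuu/f_u³`. -/
noncomputable def J44 (f : ℝ → ℝ → ℝ) : ℝ → ℝ → ℝ := fun y u =>
  f y u ^ 3 * pd2 (pd2 (pd2 (pd1 f))) y u / (pd1 f y u * (pd2 f y u) ^ 3)
    - 3 * J33 f y u * (f y u * pd2 (pd2 f) y u / (pd2 f y u) ^ 2)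
    - J22 f y u * (f y u ^ 2 * pd2 (pd2 (pd2 f)) y u / (pd2 f y u) ^ 3)

/-- The invariant derivation `∇₁ = (f/f_y)·∂/∂y` applied to `g`. -/
noncomputable def nab1 (f g : ℝ → ℝ → ℝ) : ℝ → ℝ → ℝ := fun y u =>
  f y u / pd1 f y u * pd1 g y u

/-- The invariant derivation `∇₂ = (f/f_u)·∂/∂u` applied to `g`. -/
noncomputable def nab2 (f g : ℝ → ℝ → ℝ) : ℝ → ℝ → ℝ := fun y u =>
  f y u / pd2 f y u * pd2 g y u

/-!
`J33` is unchanged by each of the three transformations that compose `f ↦ f̃`. Multiplying `f`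
by `λ` or substituting `y ↦ a·y + b` multiplies the numerator and denominator of each quotient
in `J33` by the same power of `λ` or `a`. Under `u ↦ U(u)`, the chain rule gives
`f_u ↦ U'·f_u`, `f_yu ↦ U'·f_yu`, `f_uu ↦ U'²·f_uu + U''·f_u` and `f_yuu ↦ U'²·f_yuu + U''·f_yu`.
The `U''` contributions of the two terms of `J33` are then both `U''·f²·f_yu / (U'²·f_u²·f_y)`,
so they cancel. Where `f_y` or `f_u` vanishes, both sides are `0` because `x / 0 = 0`.
-/

open Function Topology

section OneVariable

variable {𝕜 : Type*} [NontriviallyNormedField 𝕜]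

lemma deriv_comp_mul_add {F : Type*} [NormedAddCommGroup F] [NormedSpace 𝕜 F]
    (g : 𝕜 → F) (a b y : 𝕜) :
    deriv (fun s => g (a * s + b)) y = a • deriv g (a * y + b) := by
  rw [deriv_comp_mul_left a (fun t => g (t + b)) y, deriv_comp_add_const]

lemma deriv_deriv_comp {h U : 𝕜 → 𝕜} {u : 𝕜} (hh : ContDiffAt 𝕜 2 h (U u))
    (hU : ContDiffAt 𝕜 2 U u) :
    deriv (deriv (h ∘ U)) u
      = deriv (deriv h) (U u) * deriv U u ^ 2 + deriv h (U u) * deriv (deriv U) u := by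
  have hchain : deriv (h ∘ U) =ᶠ[𝓝 u] fun v => deriv h (U v) * deriv U v := by
    filter_upwards [hU.continuousAt.eventually (hh.eventually (by simp)),
      hU.eventually (by simp)] with v hhv hUv
    exact deriv_comp v (hhv.differentiableAt two_ne_zero) (hUv.differentiableAt two_ne_zero)
  have hh' := ((hh.derivWithin (m := 1) (by norm_num)).differentiableAt one_ne_zero).hasDerivAt
  have hU' := ((hU.derivWithin (m := 1) (by norm_num)).differentiableAt one_ne_zero).hasDerivAt
  have hprod : HasDerivAt (fun v => deriv h (U v) * deriv U v)
      (deriv (deriv h) (U u) * deriv U u * deriv U u + deriv h (U u) * deriv (deriv U) u) u :=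
    (hh'.comp u (hU.differentiableAt two_ne_zero).hasDerivAt).mul hU'
  rw [hchain.deriv_eq, hprod.deriv]
  ring

end OneVariable

lemma ContDiffAt.of_uncurry_snd {𝕜 E F G : Type*} [NontriviallyNormedField 𝕜]
    [NormedAddCommGroup E] [NormedSpace 𝕜 E] [NormedAddCommGroup F] [NormedSpace 𝕜 F]
    [NormedAddCommGroup G] [NormedSpace 𝕜 G] {f : E → F → G} {n : WithTop ℕ∞} {y : E} {w : F}
    (hf : ContDiffAt 𝕜 n (uncurry f) (y, w)) : ContDiffAt 𝕜 n (f y) w :=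
  hf.comp w (contDiffAt_const.prodMk contDiffAt_id)

lemma pd1_eventuallyEq_fderiv {f : ℝ → ℝ → ℝ} {p : ℝ × ℝ} {n : WithTop ℕ∞}
    (hf : ContDiffAt ℝ n (uncurry f) p) (hn : 1 ≤ n) :
    uncurry (pd1 f) =ᶠ[𝓝 p] fun q => fderiv ℝ (uncurry f) q (1, 0) := by
  filter_upwards [(hf.of_le hn).eventually (by simp)] with q hq
  exact ((hq.differentiableAt one_ne_zero).hasFDerivAt.comp_hasDerivAt q.1
    ((hasDerivAt_id q.1).prodMk (hasDerivAt_const q.1 q.2))).deriv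

lemma ContDiffAt.uncurry_pd1 {f : ℝ → ℝ → ℝ} {p : ℝ × ℝ} {m n : WithTop ℕ∞}
    (hf : ContDiffAt ℝ n (uncurry f) p) (hmn : m + 1 ≤ n) :
    ContDiffAt ℝ m (uncurry (pd1 f)) p :=
  ((hf.fderiv_right hmn).clm_apply contDiffAt_const).congr_of_eventuallyEq
    (pd1_eventuallyEq_fderiv hf (le_add_self.trans hmn))

lemma pd1_const_mul (l : ℝ) (f : ℝ → ℝ → ℝ) :
    pd1 (fun s v => l * f s v) = fun s v => l * pd1 f s v := by
  ext s v
  exact deriv_const_mul_field l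

lemma pd2_const_mul (l : ℝ) (f : ℝ → ℝ → ℝ) :
    pd2 (fun s v => l * f s v) = fun s v => l * pd2 f s v := by
  ext s v
  exact deriv_const_mul_field l

lemma pd1_comp_mul_add (a b : ℝ) (f : ℝ → ℝ → ℝ) :
    pd1 (fun s v => f (a * s + b) v) = fun s v => a * pd1 f (a * s + b) v := by
  ext s v
  exact deriv_comp_mul_add (fun t => f t v) a b s

lemma pd2_comp_fst (φ : ℝ → ℝ) (f : ℝ → ℝ → ℝ) :
    pd2 (fun s v => f (φ s) v) = fun s v => pd2 f (φ s) v :=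
  rfl

lemma pd1_comp_snd (U : ℝ → ℝ) (f : ℝ → ℝ → ℝ) :
    pd1 (fun s v => f s (U v)) = fun s v => pd1 f s (U v) :=
  rfl

lemma pd2_comp_snd {f : ℝ → ℝ → ℝ} {U : ℝ → ℝ} {y u : ℝ}
    (hf : DifferentiableAt ℝ (f y) (U u)) (hU : DifferentiableAt ℝ U u) :
    pd2 (fun s v => f s (U v)) y u = pd2 f y (U u) * deriv U u :=
  deriv_comp u hf hU

lemma pd2_pd2_comp_snd {f : ℝ → ℝ → ℝ} {U : ℝ → ℝ} {y u : ℝ}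
    (hf : ContDiffAt ℝ 2 (f y) (U u)) (hU : ContDiffAt ℝ 2 U u) :
    pd2 (pd2 (fun s v => f s (U v))) y u
      = pd2 (pd2 f) y (U u) * deriv U u ^ 2 + pd2 f y (U u) * deriv (deriv U) u :=
  deriv_deriv_comp hf hU

lemma J33_const_mul {l : ℝ} (hl : l ≠ 0) (f : ℝ → ℝ → ℝ) :
    J33 (fun s v => l * f s v) = J33 f := by
  ext y u
  simp only [J33, J22, pd1_const_mul, pd2_const_mul]
  rcases eq_or_ne (pd1 f y u) 0 with h1 | h1
  · simp [h1]
  rcases eq_or_ne (pd2 f y u) 0 with h2 | h2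
  · simp [h2]
  field_simp

lemma J33_comp_mul_add {a : ℝ} (ha : a ≠ 0) (b : ℝ) (f : ℝ → ℝ → ℝ) :
    J33 (fun s v => f (a * s + b) v) = fun s v => J33 f (a * s + b) v := by
  ext y u
  simp only [J33, J22, pd1_comp_mul_add, pd2_const_mul, pd2_comp_fst]
  rcases eq_or_ne (pd1 f (a * y + b) u) 0 with h1 | h1
  · simp [h1]
  field_simp

lemma J33_comp_snd {f : ℝ → ℝ → ℝ} {U : ℝ → ℝ} {y u : ℝ}
    (hf : ContDiffAt ℝ 3 (uncurry f) (y, U u)) (hU : ContDiffAt ℝ 2 U u)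
    (hU' : deriv U u ≠ 0) :
    J33 (fun s v => f s (U v)) y u = J33 f y (U u) := by
  have hf₀ : ContDiffAt ℝ 2 (f y) (U u) := (hf.of_le (by norm_num)).of_uncurry_snd
  have hf₁ : ContDiffAt ℝ 2 (pd1 f y) (U u) := (hf.uncurry_pd1 (by norm_num)).of_uncurry_snd
  have hU₁ := hU.differentiableAt two_ne_zero
  simp only [J33, J22, pd1_comp_snd, pd2_comp_snd (hf₀.differentiableAt two_ne_zero) hU₁,
    pd2_comp_snd (hf₁.differentiableAt two_ne_zero) hU₁, pd2_pd2_comp_snd hf₀ hU,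
    pd2_pd2_comp_snd hf₁ hU]
  rcases eq_or_ne (pd1 f y (U u)) 0 with h1 | h1
  · simp [h1]
  rcases eq_or_ne (pd2 f y (U u)) 0 with h2 | h2
  · simp [h2]
  field_simp
  ring

theorem J33_invariant_general (V : Set (ℝ × ℝ)) (hV : IsOpen V) (f : ℝ → ℝ → ℝ)
    (hf : ContDiffOn ℝ (⊤ : ℕ∞) (fun p : ℝ × ℝ => f p.1 p.2) V)
    (a b l : ℝ) (ha : a ≠ 0) (hl : l ≠ 0)
    (U : ℝ → ℝ) (hU : ContDiff ℝ (⊤ : ℕ∞) U) (hU' : ∀ v : ℝ, deriv U v ≠ 0)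
    (y u : ℝ) (hmem : (a * y + b, U u) ∈ V) :
    J33 (fun s v => l * f (a * s + b) (U v)) y u = J33 f (a * y + b) (U u) := by
  have hfT : ContDiffAt ℝ 3 (uncurry f) (a * y + b, U u) :=
    (hf.contDiffAt (hV.mem_nhds hmem)).of_le (WithTop.coe_le_coe.mpr le_top)
  calc J33 (fun s v => l * f (a * s + b) (U v)) y u
      = J33 (fun s v => f (a * s + b) (U v)) y u := congr_fun₂ (J33_const_mul hl _) y u
    _ = J33 (fun s v => f s (U v)) (a * y + b) u :=
      congr_fun₂ (J33_comp_mul_add ha b (fun s v => f s (U v))) y u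
    _ = J33 f (a * y + b) (U u) :=
      J33_comp_snd hfT (hU.contDiffAt.of_le (WithTop.coe_le_coe.mpr le_top)) (hU' u)

/-- Invariance of `J33` under the feedback substitution `T(y,u) = (a·y + b, U(u))`,
`f̃ = λ·(f ∘ T)`, where `U' ≠ 0` everywhere: at every point with
`f_y(T(y,u)) ≠ 0` and `f_u(T(y,u)) ≠ 0`, `J33(f̃)(y,u) = J33(f)(T(y,u))`. -/
theorem J33_invariant (V : Set (ℝ × ℝ)) (hV : IsOpen V) (f : ℝ → ℝ → ℝ)
    (hf : ContDiffOn ℝ (⊤ : ℕ∞) (fun p : ℝ × ℝ => f p.1 p.2) V)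
    (a b l : ℝ) (ha : a ≠ 0) (hl : l ≠ 0)
    (U : ℝ → ℝ) (hU : ContDiff ℝ (⊤ : ℕ∞) U) (hU' : ∀ v : ℝ, deriv U v ≠ 0)
    (y u : ℝ) (hmem : (a * y + b, U u) ∈ V)
    (hfy : pd1 f (a * y + b) (U u) ≠ 0) (hfu : pd2 f (a * y + b) (U u) ≠ 0) :
    J33 (fun s v => l * f (a * s + b) (U v)) y u = J33 f (a * y + b) (U u) :=
  J33_invariant_general V hV f hf a b l ha hl U hU hU' y u hmem
end

section
/- Let f : V → ℝ be smooth on an open set V ⊆ ℝ² with f, f_y and f_u nowhere zero on V, and set J21 = f·f_{yy}/f_y², J22 = f·f_{yu}/(f_y·f_u), ∇₁ = (f/f_y)·∂/∂y, ∇₂ = (f/f_u)·∂/∂u. Then on V the syzygy ∇₂(J21) − J21 + J21·J22 = ∇₁(J22) − J22 + J22² holds identically. -/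
/-!
The quotient rule gives the recurrences `∇₂ J21 = J21 + J32 − 2 J21 J22` and
`∇₁ J22 = J22 + J32 − J21 J22 − J22²`, where `J32 = f² f_yyu / (f_y² f_u)`; the second one uses
the symmetry of the mixed partials `f_yu` and `f_yyu`, obtained by identifying `pd1`, `pd2` with
`fderiv` of the uncurried function. Both sides of the syzygy are therefore `J32 − J21 J22`.
-/

open Function Filter Topology

lemma ContDiffOn.differentiableAt_of_isOpen {𝕜 E F : Type*} [NontriviallyNormedField 𝕜]
    [NormedAddCommGroup E] [NormedSpace 𝕜 E] [NormedAddCommGroup F] [NormedSpace 𝕜 F]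
    {G : E → F} {s : Set E} {p : E} {n : WithTop ℕ∞} (hG : ContDiffOn 𝕜 n G s) (hs : IsOpen s)
    (hn : n ≠ 0) (hp : p ∈ s) : DifferentiableAt 𝕜 G p :=
  (hG.differentiableOn hn).differentiableAt (hs.mem_nhds hp)

section PartialDerivatives

variable {H : ℝ → ℝ → ℝ} {V : Set (ℝ × ℝ)} {y u : ℝ} {m n : WithTop ℕ∞}

lemma hasDerivAt_fderiv_apply_one_zero (h : DifferentiableAt ℝ (uncurry H) (y, u)) :
    HasDerivAt (fun s => H s u) (fderiv ℝ (uncurry H) (y, u) (1, 0)) y := by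
  have := h.hasFDerivAt.comp_hasDerivAt y ((hasDerivAt_id y).prodMk (hasDerivAt_const y u))
  exact this

lemma hasDerivAt_fderiv_apply_zero_one (h : DifferentiableAt ℝ (uncurry H) (y, u)) :
    HasDerivAt (H y) (fderiv ℝ (uncurry H) (y, u) (0, 1)) u := by
  have := h.hasFDerivAt.comp_hasDerivAt u ((hasDerivAt_const u y).prodMk (hasDerivAt_id u))
  exact this

lemma pd1_eq_fderiv (h : DifferentiableAt ℝ (uncurry H) (y, u)) :
    pd1 H y u = fderiv ℝ (uncurry H) (y, u) (1, 0) :=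
  (hasDerivAt_fderiv_apply_one_zero h).deriv

lemma pd2_eq_fderiv (h : DifferentiableAt ℝ (uncurry H) (y, u)) :
    pd2 H y u = fderiv ℝ (uncurry H) (y, u) (0, 1) :=
  (hasDerivAt_fderiv_apply_zero_one h).deriv

lemma hasDerivAt_pd1 (h : DifferentiableAt ℝ (uncurry H) (y, u)) :
    HasDerivAt (fun s => H s u) (pd1 H y u) y :=
  pd1_eq_fderiv h ▸ hasDerivAt_fderiv_apply_one_zero h

lemma hasDerivAt_pd2 (h : DifferentiableAt ℝ (uncurry H) (y, u)) :
    HasDerivAt (H y) (pd2 H y u) u :=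
  pd2_eq_fderiv h ▸ hasDerivAt_fderiv_apply_zero_one h

lemma contDiffOn_pd1 (hV : IsOpen V) (hH : ContDiffOn ℝ n (uncurry H) V) (hmn : m + 1 ≤ n) :
    ContDiffOn ℝ m (uncurry (pd1 H)) V :=
  ((hH.fderiv_of_isOpen hV hmn).clm_apply contDiffOn_const).congr fun _ hp =>
    pd1_eq_fderiv (hH.differentiableAt_of_isOpen hV (by rintro rfl; simp at hmn) hp)

lemma contDiffOn_pd2 (hV : IsOpen V) (hH : ContDiffOn ℝ n (uncurry H) V) (hmn : m + 1 ≤ n) :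
    ContDiffOn ℝ m (uncurry (pd2 H)) V :=
  ((hH.fderiv_of_isOpen hV hmn).clm_apply contDiffOn_const).congr fun _ hp =>
    pd2_eq_fderiv (hH.differentiableAt_of_isOpen hV (by rintro rfl; simp at hmn) hp)

lemma fderiv_fderiv_apply {G : ℝ × ℝ → ℝ} {p : ℝ × ℝ}
    (hG : DifferentiableAt ℝ (fderiv ℝ G) p) (v w : ℝ × ℝ) :
    fderiv ℝ (fun q => fderiv ℝ G q v) p w = fderiv ℝ (fderiv ℝ G) p w v := by
  rw [fderiv_clm_apply hG (differentiableAt_const v)]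
  simp

lemma pd1_pd2_eq_pd2_pd1 (hV : IsOpen V) (hH : ContDiffOn ℝ 2 (uncurry H) V)
    (hp : (y, u) ∈ V) : pd1 (pd2 H) y u = pd2 (pd1 H) y u := by
  have hH' : ContDiffAt ℝ 2 (uncurry H) (y, u) := hH.contDiffAt (hV.mem_nhds hp)
  have hD : DifferentiableAt ℝ (fderiv ℝ (uncurry H)) (y, u) :=
    (hH'.fderiv_right (m := 1) le_rfl).differentiableAt one_ne_zero
  have hdiff : ∀ q ∈ V, DifferentiableAt ℝ (uncurry H) q := fun q hq =>
    hH.differentiableAt_of_isOpen hV two_ne_zero hq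
  have h1 : uncurry (pd1 H) =ᶠ[𝓝 (y, u)] fun q => fderiv ℝ (uncurry H) q (1, 0) := by
    filter_upwards [hV.mem_nhds hp] with q hq using pd1_eq_fderiv (hdiff q hq)
  have h2 : uncurry (pd2 H) =ᶠ[𝓝 (y, u)] fun q => fderiv ℝ (uncurry H) q (0, 1) := by
    filter_upwards [hV.mem_nhds hp] with q hq using pd2_eq_fderiv (hdiff q hq)
  rw [pd1_eq_fderiv ((contDiffOn_pd2 hV hH le_rfl).differentiableAt_of_isOpen hV one_ne_zero hp),
    pd2_eq_fderiv ((contDiffOn_pd1 hV hH le_rfl).differentiableAt_of_isOpen hV one_ne_zero hp),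
    h1.fderiv_eq, h2.fderiv_eq, fderiv_fderiv_apply hD, fderiv_fderiv_apply hD]
  exact (hH'.isSymmSndFDerivAt (by simp)).eq _ _

end PartialDerivatives

section Invariants

variable {f : ℝ → ℝ → ℝ} {V : Set (ℝ × ℝ)} {y u : ℝ}

lemma nab2_J21 (hV : IsOpen V) (hf : ContDiffOn ℝ 3 (uncurry f) V) (hp : (y, u) ∈ V)
    (hfy : pd1 f y u ≠ 0) (hfu : pd2 f y u ≠ 0) :
    nab2 f (J21 f) y u = J21 f y u + J32 f y u - 2 * J21 f y u * J22 f y u := by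
  have hf1 := contDiffOn_pd1 hV hf (m := 2) le_rfl
  have hf11 := contDiffOn_pd1 hV hf1 (m := 1) le_rfl
  have hJ := ((hasDerivAt_pd2 (hf.differentiableAt_of_isOpen hV (by simp) hp)).mul
    (hasDerivAt_pd2 (hf11.differentiableAt_of_isOpen hV one_ne_zero hp))).div
    ((hasDerivAt_pd2 (hf1.differentiableAt_of_isOpen hV two_ne_zero hp)).pow 2) (pow_ne_zero 2 hfy)
  have hJ21 : pd2 (J21 f) y u = _ := hJ.deriv
  rw [nab2, hJ21]
  simp only [Pi.mul_apply, Pi.pow_apply, J21, J22, J32]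
  field_simp
  ring

lemma nab1_J22 (hV : IsOpen V) (hf : ContDiffOn ℝ 3 (uncurry f) V) (hp : (y, u) ∈ V)
    (hfy : pd1 f y u ≠ 0) (hfu : pd2 f y u ≠ 0) :
    nab1 f (J22 f) y u = J22 f y u + J32 f y u - J21 f y u * J22 f y u - J22 f y u ^ 2 := by
  have hf1 := contDiffOn_pd1 hV hf (m := 2) le_rfl
  have hf2 := contDiffOn_pd2 hV hf (m := 2) le_rfl
  have hf12 := contDiffOn_pd2 hV hf1 (m := 1) le_rfl
  have hJ := ((hasDerivAt_pd1 (hf.differentiableAt_of_isOpen hV (by simp) hp)).mul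
    (hasDerivAt_pd1 (hf12.differentiableAt_of_isOpen hV one_ne_zero hp))).div
    ((hasDerivAt_pd1 (hf1.differentiableAt_of_isOpen hV two_ne_zero hp)).mul
      (hasDerivAt_pd1 (hf2.differentiableAt_of_isOpen hV two_ne_zero hp))) (mul_ne_zero hfy hfu)
  have hJ22 : pd1 (J22 f) y u = _ := hJ.deriv
  rw [nab1, hJ22, pd1_pd2_eq_pd2_pd1 hV (hf.of_le (by norm_num)) hp,
    pd1_pd2_eq_pd2_pd1 hV hf1 hp]
  simp only [Pi.mul_apply, J21, J22, J32]
  field_simp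
  ring

end Invariants

theorem syzygy_third_order_general (V : Set (ℝ × ℝ)) (hV : IsOpen V) (f : ℝ → ℝ → ℝ)
    (hf : ContDiffOn ℝ (⊤ : ℕ∞) (fun p : ℝ × ℝ => f p.1 p.2) V)
    (hfy : ∀ y u : ℝ, (y, u) ∈ V → pd1 f y u ≠ 0)
    (hfu : ∀ y u : ℝ, (y, u) ∈ V → pd2 f y u ≠ 0) :
    ∀ y u : ℝ, (y, u) ∈ V →
      nab2 f (J21 f) y u - J21 f y u + J21 f y u * J22 f y u
        = nab1 f (J22 f) y u - J22 f y u + (J22 f y u) ^ 2 := by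
  intro y u hp
  have hf3 : ContDiffOn ℝ 3 (uncurry f) V := hf.of_le (WithTop.coe_le_coe.2 le_top)
  rw [nab2_J21 hV hf3 hp (hfy y u hp) (hfu y u hp), nab1_J22 hV hf3 hp (hfy y u hp) (hfu y u hp)]
  ring

/-- The syzygy `∇₂(J21) − J21 + J21·J22 = ∇₁(J22) − J22 + J22²` on an open set where `f`,
`f_y` and `f_u` are nowhere zero. -/
theorem syzygy_third_order (V : Set (ℝ × ℝ)) (hV : IsOpen V) (f : ℝ → ℝ → ℝ)
    (hf : ContDiffOn ℝ (⊤ : ℕ∞) (fun p : ℝ × ℝ => f p.1 p.2) V)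
    (hf0 : ∀ y u : ℝ, (y, u) ∈ V → f y u ≠ 0)
    (hfy : ∀ y u : ℝ, (y, u) ∈ V → pd1 f y u ≠ 0)
    (hfu : ∀ y u : ℝ, (y, u) ∈ V → pd2 f y u ≠ 0) :
    ∀ y u : ℝ, (y, u) ∈ V →
      nab2 f (J21 f) y u - J21 f y u + J21 f y u * J22 f y u
        = nab1 f (J22 f) y u - J22 f y u + (J22 f y u) ^ 2 :=
  syzygy_third_order_general V hV f hf hfy hfu
end
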